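/- Let (τ_n)_{n≥0} be independent nonnegative square-integrable random variables with means m_n := E[τ_n] > 0 such that Σ_n m_n < ∞. Set s_n := Σ_{k≥n} m_k and T_n := Σ_{k≥n} τ_k. Assume (i) sup_n E[τ_n²]/m_n² < ∞ and (ii) Σ_n (m_n/s_n)² < ∞. Then T_n/s_n → 1 almost surely as n → ∞. -/

import Mathlib

/-!
The centred, rescaled variables `X_k = (τ_k - m_k) / s_k` are independent with
`Var X_k ≤ C (m_k / s_k)²`, a summable sequence, so the partial sums of `∑ X_k` form an
`L²`-bounded martingale and converge almost surely. Since `T_n - s_n = ∑_{k ≥ n} s_k X_k` with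
`s_k` decreasing, Abel summation (a tail version of Kronecker's lemma) gives
`(T_n - s_n) / s_n → 0`.
-/

open Filter MeasureTheory ProbabilityTheory Finset Topology

lemma tsum_nat_add_eq_add_tsum {f : ℕ → ℝ} (hf : Summable f) (n : ℕ) :
    ∑' k, f (n + k) = f n + ∑' k, f (n + 1 + k) := by
  have := (hf.comp_injective (add_right_injective n)).tsum_eq_zero_add
  simpa only [Function.comp_def, add_zero, add_assoc, add_comm 1] using this

lemma antitone_tsum_nat_add {f : ℕ → ℝ} (hf : Summable f) (hf0 : ∀ n, 0 ≤ f n) :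
    Antitone fun n => ∑' k, f (n + k) :=
  antitone_nat_of_succ_le fun n => by
    rw [tsum_nat_add_eq_add_tsum hf n]; linarith [hf0 n]

lemma tsum_nat_add_pos {f : ℕ → ℝ} (hf : Summable f) (hf0 : ∀ n, 0 < f n) (n : ℕ) :
    0 < ∑' k, f (n + k) :=
  (hf.comp_injective (add_right_injective n)).tsum_pos (fun _ => (hf0 _).le) 0 (hf0 _)

lemma abs_sum_range_mul_sub_le {s R : ℕ → ℝ} {ε : ℝ} (hs : Antitone s)
    (hs0 : ∀ k, 0 ≤ s k) (hR : ∀ k, |R k| ≤ ε) (M : ℕ) :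
    |∑ k ∈ range M, s k * (R k - R (k + 1))| ≤ 2 * ε * s 0 := by
  -- Summation by parts, keeping the boundary terms `s 0 * R 0` and `s M * R M`.
  have abel : ∀ M, |∑ k ∈ range M, s k * (R k - R (k + 1)) - s 0 * R 0 + s M * R M|
      ≤ ε * (s 0 - s M) := by
    intro M
    induction M with
    | zero => simp
    | succ M ih =>
      have hstep : |(s M - s (M + 1)) * R (M + 1)| ≤ (s M - s (M + 1)) * ε := by
        rw [abs_mul, abs_of_nonneg (sub_nonneg.2 (hs M.le_succ))]
        exact mul_le_mul_of_nonneg_left (hR _) (sub_nonneg.2 (hs M.le_succ))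
      rw [sum_range_succ]
      calc _ = |(∑ k ∈ range M, s k * (R k - R (k + 1)) - s 0 * R 0 + s M * R M)
              - (s M - s (M + 1)) * R (M + 1)| := by ring_nf
        _ ≤ ε * (s 0 - s M) + (s M - s (M + 1)) * ε := (abs_sub _ _).trans (add_le_add ih hstep)
        _ = ε * (s 0 - s (M + 1)) := by ring
  have h0 : |s 0 * R 0| ≤ s 0 * ε := by
    rw [abs_mul, abs_of_nonneg (hs0 0)]; exact mul_le_mul_of_nonneg_left (hR 0) (hs0 0)
  have hM : |s M * R M| ≤ s M * ε := by
    rw [abs_mul, abs_of_nonneg (hs0 M)]; exact mul_le_mul_of_nonneg_left (hR M) (hs0 M)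
  have := abs_le.1 (abel M)
  rw [abs_le] at h0 hM ⊢
  constructor <;> nlinarith [abs_nonneg (R 0), hR 0]

theorem tendsto_tsum_nat_add_div_of_tendsto_sum_div {x s : ℕ → ℝ} (hs : Antitone s)
    (hs0 : ∀ n, 0 < s n) (hx : Summable x) {c : ℝ}
    (hc : Tendsto (fun N => ∑ k ∈ range N, x k / s k) atTop (𝓝 c)) :
    Tendsto (fun n => (∑' k, x (n + k)) / s n) atTop (𝓝 0) := by
  set R : ℕ → ℝ := fun n => c - ∑ k ∈ range n, x k / s k
  have hR : Tendsto R atTop (𝓝 0) := by simpa using (tendsto_const_nhds (x := c)).sub hc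
  have hx_eq : ∀ k, x k = s k * (R k - R (k + 1)) := fun k => by
    simp only [R, sum_range_succ]; field_simp [(hs0 k).ne']; ring
  rw [Metric.tendsto_atTop]
  intro ε hε
  obtain ⟨K, hK⟩ := Metric.tendsto_atTop.1 hR (ε / 4) (by positivity)
  refine ⟨K, fun n hn => ?_⟩
  have hpartial : ∀ M, |∑ k ∈ range M, x (n + k)| ≤ 2 * (ε / 4) * s n := by
    intro M
    simp only [hx_eq]
    exact abs_sum_range_mul_sub_le (s := fun k => s (n + k)) (R := fun k => R (n + k))
      (fun _ _ hab => hs (by omega)) (fun k => (hs0 _).le)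
      (fun k => by simpa using (hK (n + k) (by omega)).le) M
  have htail : |∑' k, x (n + k)| ≤ 2 * (ε / 4) * s n :=
    le_of_tendsto ((continuous_abs.tendsto _).comp
      ((hx.comp_injective (add_right_injective n)).hasSum.tendsto_sum_nat))
      (Eventually.of_forall hpartial)
  rw [Real.dist_eq, sub_zero, abs_div, abs_of_pos (hs0 n), div_lt_iff₀ (hs0 n)]
  nlinarith [hs0 n]

theorem ae_summable_of_summable_integral {α : Type*} [MeasurableSpace α] {μ : Measure α}
    {f : ℕ → α → ℝ} (hf0 : ∀ n, 0 ≤ᵐ[μ] f n) (hf : ∀ n, Integrable (f n) μ)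
    (hsum : Summable fun n => ∫ a, f n a ∂μ) : ∀ᵐ a ∂μ, Summable fun n => f n a := by
  have hmeas : ∀ n, AEMeasurable (fun a => ENNReal.ofReal (f n a)) μ :=
    fun n => (hf n).aemeasurable.ennreal_ofReal
  have hfinite : ∀ᵐ a ∂μ, ∑' n, ENNReal.ofReal (f n a) < ⊤ := by
    refine ae_lt_top' (AEMeasurable.tsum hmeas) ?_
    rw [lintegral_tsum hmeas]
    simp_rw [← ofReal_integral_eq_lintegral_ofReal (hf _) (hf0 _)]
    rw [← ENNReal.ofReal_tsum_of_nonneg (fun n => integral_nonneg_of_ae (hf0 n)) hsum]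
    exact ENNReal.ofReal_ne_top
  filter_upwards [hfinite, ae_all_iff.2 hf0] with a ha ha0
  exact (ENNReal.summable_toReal ha.ne).congr fun n => ENNReal.toReal_ofReal (ha0 n)

namespace ProbabilityTheory

variable {Ω : Type*} [MeasurableSpace Ω] {P : Measure Ω} [IsProbabilityMeasure P]

theorem iIndepFun.martingale_sum_range_succ {X : ℕ → Ω → ℝ} (hX : iIndepFun X P)
    (hXm : ∀ k, StronglyMeasurable (X k)) (hint : ∀ k, Integrable (X k) P)
    (hmean : ∀ k, P[X k] = 0) :
    Martingale (fun n => ∑ k ∈ range (n + 1), X k) (Filtration.natural X hXm) P := by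
  refine martingale_of_condExp_sub_eq_zero_nat (fun n => ?_)
    (fun n => integrable_finsetSum' _ fun k _ => hint k) (fun n => ?_)
  · exact Finset.stronglyMeasurable_sum _ fun k hk =>
      (Filtration.stronglyAdapted_natural hXm).stronglyMeasurable_le
        (by simpa [Nat.lt_succ_iff] using hk)
  · have hsub : ∑ k ∈ range (n + 1 + 1), X k - ∑ k ∈ range (n + 1), X k = X (n + 1) := by
      rw [sum_range_succ, add_sub_cancel_left]
    rw [hsub]
    filter_upwards [hX.condExp_natural_ae_eq_of_lt hXm n.lt_succ_self] with ω hω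
    simp [hω, hmean]

lemma eLpNorm_one_le_one_add_variance {Y : Ω → ℝ} (hY : MemLp Y 2 P) (hmean : P[Y] = 0) :
    eLpNorm Y 1 P ≤ ENNReal.ofReal (1 + Var[Y; P]) := by
  rw [eLpNorm_one_eq_lintegral_enorm, ← ofReal_integral_norm_eq_lintegral_enorm
    (hY.integrable one_le_two), variance_of_integral_eq_zero hY.aemeasurable hmean]
  refine ENNReal.ofReal_le_ofReal ?_
  have hint : Integrable (fun ω => 1 + Y ω ^ 2) P := (integrable_const 1).add hY.integrable_sq
  calc ∫ ω, ‖Y ω‖ ∂P ≤ ∫ ω, 1 + Y ω ^ 2 ∂P :=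
        integral_mono (hY.integrable one_le_two).norm hint fun ω => by
          nlinarith [Real.norm_eq_abs (Y ω), sq_abs (Y ω), abs_nonneg (Y ω)]
    _ = 1 + ∫ ω, Y ω ^ 2 ∂P := by
        rw [integral_add (integrable_const 1) hY.integrable_sq]; simp

theorem iIndepFun.ae_exists_tendsto_sum_range_of_stronglyMeasurable {X : ℕ → Ω → ℝ}
    (hX : iIndepFun X P) (hXm : ∀ k, StronglyMeasurable (X k)) (hL2 : ∀ k, MemLp (X k) 2 P)
    (hmean : ∀ k, P[X k] = 0) (hvar : Summable fun k => Var[X k; P]) :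
    ∀ᵐ ω ∂P, ∃ c, Tendsto (fun N => ∑ k ∈ range N, X k ω) atTop (𝓝 c) := by
  have hmart := hX.martingale_sum_range_succ hXm (fun k => (hL2 k).integrable one_le_two) hmean
  have hbdd : ∀ n, eLpNorm (∑ k ∈ range (n + 1), X k) 1 P
      ≤ (ENNReal.ofReal (1 + ∑' k, Var[X k; P])).toNNReal := by
    intro n
    rw [ENNReal.coe_toNNReal ENNReal.ofReal_ne_top]
    have hpair : Set.Pairwise ↑(range (n + 1)) fun i j => X i ⟂ᵢ[P] X j :=
      fun i _ j _ hij => hX.indepFun hij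
    refine (eLpNorm_one_le_one_add_variance (memLp_finsetSum' _ fun k _ => hL2 k) ?_).trans ?_
    · simp only [Finset.sum_apply]
      rw [integral_finsetSum _ fun k _ => (hL2 k).integrable one_le_two]
      simp [hmean]
    · rw [IndepFun.variance_sum (fun k _ => hL2 k) hpair]
      gcongr
      exact hvar.sum_le_tsum _ fun k _ => variance_nonneg _ _
  filter_upwards [hmart.submartingale.exists_ae_tendsto_of_bdd hbdd] with ω ⟨c, hc⟩
  refine ⟨c, (tendsto_add_atTop_iff_nat 1).1 ?_⟩
  simpa only [Finset.sum_apply] using hc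

theorem iIndepFun.ae_exists_tendsto_sum_range {X : ℕ → Ω → ℝ}
    (hX : iIndepFun X P) (hL2 : ∀ k, MemLp (X k) 2 P)
    (hmean : ∀ k, P[X k] = 0) (hvar : Summable fun k => Var[X k; P]) :
    ∀ᵐ ω ∂P, ∃ c, Tendsto (fun N => ∑ k ∈ range N, X k ω) atTop (𝓝 c) := by
  set Y : ℕ → Ω → ℝ := fun k => (hL2 k).aestronglyMeasurable.mk (X k)
  have hXY : ∀ k, X k =ᵐ[P] Y k := fun k => (hL2 k).aestronglyMeasurable.ae_eq_mk
  have hY := (hX.congr hXY).ae_exists_tendsto_sum_range_of_stronglyMeasurable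
    (fun k => (hL2 k).aestronglyMeasurable.stronglyMeasurable_mk)
    (fun k => (hL2 k).ae_eq (hXY k)) (fun k => (integral_congr_ae (hXY k)).symm.trans (hmean k))
    (by simpa only [variance_congr (hXY _)] using hvar)
  filter_upwards [hY, ae_all_iff.2 hXY] with ω hω hXYω
  simpa only [hXYω] using hω

lemma variance_sub_const_div_le {Y : Ω → ℝ} (hY : AEStronglyMeasurable Y P) (a b : ℝ) :
    Var[fun ω => (Y ω - a) / b; P] ≤ (∫ ω, Y ω ^ 2 ∂P) / b ^ 2 := by
  have hdiv : (fun ω => (Y ω - a) / b) = fun ω => b⁻¹ * (Y ω - a) := by ext; ring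
  rw [hdiv, variance_const_mul, variance_sub_const hY, inv_pow, ← div_eq_inv_mul]
  gcongr
  exact variance_le_expectation_sq hY

lemma summable_variance_sub_div {τ : ℕ → Ω → ℝ} (hτ : ∀ k, AEStronglyMeasurable (τ k) P)
    {m s : ℕ → ℝ} {C : ℝ} (hC : ∀ k, ∫ ω, τ k ω ^ 2 ∂P ≤ C * m k ^ 2)
    (hsq : Summable fun k => (m k / s k) ^ 2) :
    Summable fun k => Var[fun ω => (τ k ω - m k) / s k; P] := by
  refine (hsq.mul_left C).of_nonneg_of_le (fun k => variance_nonneg _ _) fun k => ?_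
  calc Var[fun ω => (τ k ω - m k) / s k; P] ≤ (∫ ω, τ k ω ^ 2 ∂P) / s k ^ 2 :=
        variance_sub_const_div_le (hτ k) _ _
    _ ≤ C * m k ^ 2 / s k ^ 2 := by gcongr; exact hC k
    _ = C * (m k / s k) ^ 2 := by ring

end ProbabilityTheory

/-- Gradual regime, strong law of large numbers: if the `τ_n` are independent nonnegative
square-integrable with means `m_n > 0`, `Σ m_n < ∞`, `sup_n E[τ_n²]/m_n² < ∞` and
`Σ_n (m_n/s_n)² < ∞`, then `T_n/s_n → 1` almost surely, where `T_n = Σ_{k≥n} τ_k` and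
`s_n = Σ_{k≥n} m_k`. -/
theorem stmt9 {Ω : Type*} [MeasurableSpace Ω] (P : Measure Ω) [IsProbabilityMeasure P]
    (τ : ℕ → Ω → ℝ) (hτpos : ∀ n, ∀ ω, 0 ≤ τ n ω)
    (hL2 : ∀ n, MemLp (τ n) 2 P)
    (hindep : iIndepFun τ P)
    (m : ℕ → ℝ) (hm : ∀ n, m n = ∫ ω, τ n ω ∂P) (hmpos : ∀ n, 0 < m n)
    (hsum : Summable m)
    (s : ℕ → ℝ) (hs : ∀ n, s n = ∑' k : ℕ, m (n + k))
    (T : ℕ → Ω → ℝ) (hT : ∀ n ω, T n ω = ∑' k : ℕ, τ (n + k) ω)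
    (hmom2 : ∃ C : ℝ, ∀ n, (∫ ω, (τ n ω) ^ 2 ∂P) / (m n) ^ 2 ≤ C)
    (hsq : Summable (fun n => (m n / s n) ^ 2)) :
    ∀ᵐ ω ∂P, Tendsto (fun n => T n ω / s n) atTop (nhds 1) := by
  obtain ⟨C, hC⟩ := hmom2
  have hs_pos : ∀ n, 0 < s n := fun n => hs n ▸ tsum_nat_add_pos hsum hmpos n
  have hs_anti : Antitone s :=
    (funext hs : s = _) ▸ antitone_tsum_nat_add hsum fun n => (hmpos n).le
  set X : ℕ → Ω → ℝ := fun k ω => (τ k ω - m k) / s k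
  have hX_indep : iIndepFun X P := hindep.comp (fun k x => (x - m k) / s k) fun k => by fun_prop
  have hX_L2 : ∀ k, MemLp (X k) 2 P := fun k => by
    simpa only [X, div_eq_mul_inv, Pi.sub_apply] using
      ((hL2 k).sub (memLp_const (m k))).mul_const (s k)⁻¹
  have hX_mean : ∀ k, P[X k] = 0 := fun k => by
    simp [X, integral_div, integral_sub ((hL2 k).integrable one_le_two) (integrable_const _), ← hm]
  have hX_var : Summable fun k => Var[X k; P] :=
    summable_variance_sub_div (fun k => (hL2 k).aestronglyMeasurable)
      (fun k => (div_le_iff₀ (pow_pos (hmpos k) 2)).1 (hC k)) hsq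
  have hτ_summable : ∀ᵐ ω ∂P, Summable fun k => τ k ω :=
    ae_summable_of_summable_integral (fun n => ae_of_all _ (hτpos n))
      (fun n => (hL2 n).integrable one_le_two) (hsum.congr hm)
  filter_upwards [hτ_summable, hX_indep.ae_exists_tendsto_sum_range hX_L2 hX_mean hX_var]
    with ω hτω ⟨c, hc⟩
  have hdev := tendsto_tsum_nat_add_div_of_tendsto_sum_div hs_anti hs_pos (hτω.sub hsum) hc
  refine Tendsto.congr (fun n => ?_) (by simpa using hdev.const_add 1)
  have htail : ∀ f : ℕ → ℝ, Summable f → Summable fun k => f (n + k) :=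
    fun f hf => hf.comp_injective (add_right_injective n)
  rw [(htail _ hτω).tsum_sub (htail _ hsum), hT, hs]
  field_simp [(hs n ▸ hs_pos n).ne']
  ring
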